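/- Let X be a standard Borel space with probability measure μ_X, κ1 a measurable kernel from X to probability measures on {0,1}², κ0 a measurable kernel from X to probability measures on {a_1, …, a_J}, and μ1X, μ0X the induced joint laws on {0,1}² × X and {a_1,…,a_J} × X. Set P11(x) := κ1(x)({(1,1)}), P01(x) := κ1(x)({(0,1)}), P_ℓ(x) := κ0(x)({a_ℓ}). Then for any distinct classes a_j ≠ a_{j†} there exists a single measure μ ∈ M(μ1X, μ0X) simultaneously attaining the four Fréchet bounds: μ({y1=(1,1), y0=a_j}) = ∫ min{P11, P_j} dμ_X, μ({y1=(0,1), y0=a_j}) = ∫ max{P01 + P_j − 1, 0} dμ_X, μ({y1=(1,1), y0=a_{j†}}) = ∫ max{P11 + P_{j†} − 1, 0} dμ_X, and μ({y1=(0,1), y0=a_{j†}}) = ∫ min{P01, P_{j†}} dμ_X (the simultaneous-attainability claim established in the proof of Corollary 2 via an optimal transport problem with ±1 costs). -/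

import Mathlib

open MeasureTheory ProbabilityTheory

/-- The set `M(μ1X, μ0X)` of probability measures on `Y1 × Y0 × X` whose projection on
`(Y1, X)` is `μ1X` and whose projection on `(Y0, X)` is `μ0X`. -/
def MSet {Y1 Y0 X : Type*} [MeasurableSpace Y1] [MeasurableSpace Y0] [MeasurableSpace X]
    (μ1X : Measure (Y1 × X)) (μ0X : Measure (Y0 × X)) :
    Set (Measure (Y1 × Y0 × X)) :=
  {μ | IsProbabilityMeasure μ ∧
    μ.map (fun p => (p.1, p.2.2)) = μ1X ∧ μ.map (fun p => (p.2.1, p.2.2)) = μ0X}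

/-!
Order `{0,1}²` so that `(0,1)` comes first and `(1,1)` last, and the classes so that `a_{j†}`
comes first and `a_j` last. For each `x`, cut `[0,1)` into consecutive intervals of lengths
`κ1 x {y}` in that order, and likewise for `κ0 x`; sending one uniform variable through both
quantile maps couples `κ1 x` and `κ0 x` with the right marginals, measurably in `x`. The first
intervals are `[0,p)`, `[0,q)` and the last ones `[1-p,1)`, `[1-q,1)`, so a first–first or
last–last cell has mass `min p q` and a mixed cell has mass `max (p + q - 1) 0`. Integrating
against `μX` gives the four bounds with one coupling.
-/

open Set Function

lemma exists_embedding_nat_first_last {α : Type*} [Finite α] {a b : α} (hab : a ≠ b) :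
    ∃ r : α ↪ ℕ, (∀ c, r a ≤ r c) ∧ ∀ c, r c ≤ r b := by
  classical
  obtain ⟨n, ⟨e⟩⟩ := Finite.exists_equiv_fin α
  let f : α → ℕ := fun c => if c = a then 0 else if c = b then n + 1 else e c + 1
  have hf : Injective f := by
    intro c d h
    have hc := (e c).isLt
    have hd := (e d).isLt
    simp only [f] at h
    split_ifs at h <;> first | omega | exact e.injective (Fin.ext (by omega)) | simp_all
  refine ⟨⟨f, hf⟩, fun c => by simp [f], fun c => ?_⟩
  have := (e c).isLt
  simp only [Embedding.coeFn_mk, f, if_neg hab.symm]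
  split_ifs <;> omega

section RankInterval

variable {α : Type*} [MeasurableSpace α] (ν : Measure α) (r : α ↪ ℕ)

def rankInterval (a : α) : Set ℝ :=
  Ico (ν.real {b | r b < r a}) (ν.real {b | r b ≤ r a})

-- Off `⋃ a, rankInterval ν r a` the value is junk; only `u ∈ [0,1)` is ever sampled.
open scoped Classical in
noncomputable def rankQuantile [Nonempty α] (u : ℝ) : α :=
  if h : ∃ a, u ∈ rankInterval ν r a then h.choose else Classical.arbitrary α

variable {ν r}

lemma eq_of_mem_rankInterval [IsFiniteMeasure ν] {u : ℝ} {a b : α}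
    (ha : u ∈ rankInterval ν r a) (hb : u ∈ rankInterval ν r b) : a = b := by
  have hmono : ∀ {a b : α}, r a < r b →
      ν.real {c | r c ≤ r a} ≤ ν.real {c | r c < r b} :=
    fun h => measureReal_mono fun c hc => lt_of_le_of_lt hc h
  by_contra hab
  rcases lt_or_gt_of_ne (r.injective.ne hab) with h | h
  · linarith [hmono h, ha.2, hb.1]
  · linarith [hmono h, ha.1, hb.2]

lemma rankInterval_subset_Ico [IsProbabilityMeasure ν] (a : α) :
    rankInterval ν r a ⊆ Ico 0 1 :=
  Ico_subset_Ico measureReal_nonneg measureReal_le_one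

lemma exists_mem_rankInterval [Finite α] [IsProbabilityMeasure ν] {u : ℝ}
    (hu : u ∈ Ico (0 : ℝ) 1) : ∃ a, u ∈ rankInterval ν r a := by
  have : Nonempty α := nonempty_of_isProbabilityMeasure ν
  obtain ⟨top, htop⟩ := Finite.exists_max r
  have huniv : {b | r b ≤ r top} = univ := eq_univ_of_forall htop
  have hex : ∃ k, u < ν.real {b | r b ≤ k} :=
    ⟨r top, by rw [huniv, probReal_univ]; exact hu.2⟩
  classical
  set k := Nat.find hex
  have hbelow : ν.real {b | r b < k} ≤ u := by
    rcases Nat.eq_zero_or_pos k with hk | hk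
    · simpa [hk] using hu.1
    · have hpred : {b | r b < k} = {b | r b ≤ k - 1} := by
        ext b
        simp only [mem_ofPred_eq]
        omega
      simpa [hpred] using Nat.find_min hex (Nat.sub_lt hk one_pos)
  obtain ⟨a, ha⟩ : ∃ a, r a = k := by
    by_contra! hk
    have : {b | r b ≤ k} = {b | r b < k} := by
      ext b
      simp only [mem_ofPred_eq, le_iff_lt_or_eq, or_iff_left (hk b)]
    linarith [Nat.find_spec hex, this ▸ hbelow]
  exact ⟨a, by rw [rankInterval, ha]; exact ⟨hbelow, Nat.find_spec hex⟩⟩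

lemma rankInterval_of_forall_le [IsFiniteMeasure ν] {a : α} (ha : ∀ b, r a ≤ r b) :
    rankInterval ν r a = Ico 0 (ν.real {a}) := by
  have hlow : {b | r b < r a} = ∅ := eq_empty_of_forall_notMem fun b hb => (ha b).not_gt hb
  have hup : {b | r b ≤ r a} = {a} := by
    ext b
    exact ⟨fun h => r.injective (le_antisymm h (ha b)), fun h => h ▸ le_refl (r a)⟩
  rw [rankInterval, hlow, hup, measureReal_empty]

variable [MeasurableSingletonClass α]

lemma volume_rankInterval [IsFiniteMeasure ν] (a : α) :
    volume (rankInterval ν r a) = ν {a} := by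
  have hsplit : {b | r b ≤ r a} = {b | r b < r a} ∪ {a} := by
    ext b
    simp only [mem_ofPred_eq, mem_union, mem_singleton_iff, le_iff_lt_or_eq,
      r.injective.eq_iff]
  rw [rankInterval, Real.volume_Ico, hsplit,
    measureReal_union (by simp) (measurableSet_singleton a), add_sub_cancel_left,
    ofReal_measureReal]

lemma rankInterval_of_forall_ge [IsProbabilityMeasure ν] {a : α} (ha : ∀ b, r b ≤ r a) :
    rankInterval ν r a = Ico (1 - ν.real {a}) 1 := by
  have hlow : {b | r b < r a} = {a}ᶜ := by
    ext b
    simp [lt_iff_le_and_ne, ha b, r.injective.eq_iff]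
  rw [rankInterval, hlow, probReal_compl_eq_one_sub (measurableSet_singleton a),
    show {b | r b ≤ r a} = univ from eq_univ_of_forall ha, probReal_univ]

end RankInterval

section RankQuantile

variable {α : Type*} [MeasurableSpace α] [Nonempty α] {ν : Measure α} {r : α ↪ ℕ}

lemma rankQuantile_eq_iff [IsFiniteMeasure ν] {u : ℝ} {a : α} :
    rankQuantile ν r u = a ↔
      u ∈ rankInterval ν r a ∨
        (∀ b, u ∉ rankInterval ν r b) ∧ a = Classical.arbitrary α := by
  unfold rankQuantile
  split_ifs with h
  · refine ⟨fun hq => .inl (hq ▸ h.choose_spec), ?_⟩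
    rintro (ha | ⟨hnone, -⟩)
    · exact eq_of_mem_rankInterval h.choose_spec ha
    · exact absurd h.choose_spec (hnone _)
  · rw [not_exists] at h
    exact ⟨fun hq => .inr ⟨h, hq.symm⟩,
      fun hq => hq.elim (absurd · (h a)) fun h' => h'.2.symm⟩

variable [Finite α] [IsProbabilityMeasure ν]

lemma rankQuantile_eq_iff_of_mem_Ico {u : ℝ} (hu : u ∈ Ico (0 : ℝ) 1) {a : α} :
    rankQuantile ν r u = a ↔ u ∈ rankInterval ν r a := by
  obtain ⟨b, hb⟩ := exists_mem_rankInterval (ν := ν) (r := r) hu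
  rw [rankQuantile_eq_iff]
  exact or_iff_left fun h => h.1 b hb

lemma preimage_rankQuantile_inter_Ico (a : α) :
    {u | rankQuantile ν r u = a} ∩ Ico 0 1 = rankInterval ν r a := by
  ext u
  refine ⟨fun ⟨hq, hu⟩ => (rankQuantile_eq_iff_of_mem_Ico hu).1 hq, fun hu => ?_⟩
  have hu' := rankInterval_subset_Ico a hu
  exact ⟨(rankQuantile_eq_iff_of_mem_Ico hu').2 hu, hu'⟩

end RankQuantile

lemma measurable_rankQuantile {X α : Type*} [MeasurableSpace X] [MeasurableSpace α] [Finite α]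
    [MeasurableSingletonClass α] [Nonempty α] (κ : Kernel X α) [IsFiniteKernel κ]
    (r : α ↪ ℕ) :
    Measurable fun p : X × ℝ => rankQuantile (κ p.1) r p.2 := by
  have hmass : ∀ s : Set α, Measurable fun p : X × ℝ => (κ p.1).real s := fun s =>
    ((κ.measurable_coe (toFinite s).measurableSet).ennreal_toReal).comp measurable_fst
  have hI : ∀ a, MeasurableSet {p : X × ℝ | p.2 ∈ rankInterval (κ p.1) r a} := fun a =>
    (measurableSet_le (hmass _) measurable_snd).inter (measurableSet_lt measurable_snd (hmass _))
  refine measurable_to_countable' fun a => ?_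
  have hfiber : (fun p : X × ℝ => rankQuantile (κ p.1) r p.2) ⁻¹' {a} =
      {p | p.2 ∈ rankInterval (κ p.1) r a} ∪
        ((⋂ b, {p : X × ℝ | p.2 ∈ rankInterval (κ p.1) r b}ᶜ) ∩
          {_p | a = Classical.arbitrary α}) := by
    ext p
    simp only [mem_preimage, mem_singleton_iff, rankQuantile_eq_iff, mem_union, mem_inter_iff,
      mem_iInter, mem_compl_iff, mem_ofPred_eq]
  rw [hfiber]
  exact (hI a).union ((MeasurableSet.iInter fun b => (hI b).compl).inter (.const _))

section QuantileCoupling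

instance : IsProbabilityMeasure (volume.restrict (Ico (0 : ℝ) 1)) :=
  ⟨by simp⟩

variable {X α β : Type*} [MeasurableSpace X]
  [MeasurableSpace α] [Finite α] [MeasurableSingletonClass α] [Nonempty α]
  [MeasurableSpace β] [Finite β] [MeasurableSingletonClass β] [Nonempty β]
  (κ : Kernel X α) [IsMarkovKernel κ] (r : α ↪ ℕ)
  (η : Kernel X β) [IsMarkovKernel η] (s : β ↪ ℕ)

noncomputable def quantileCoupling : Kernel X (α × β) :=
  (Kernel.id ×ₖ Kernel.const X (volume.restrict (Ico (0 : ℝ) 1))).map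
    fun p => (rankQuantile (κ p.1) r p.2, rankQuantile (η p.1) s p.2)

lemma measurable_rankQuantile_pair :
    Measurable fun p : X × ℝ => (rankQuantile (κ p.1) r p.2, rankQuantile (η p.1) s p.2) :=
  (measurable_rankQuantile κ r).prodMk (measurable_rankQuantile η s)

instance : IsMarkovKernel (quantileCoupling κ r η s) :=
  Kernel.IsMarkovKernel.map _ (measurable_rankQuantile_pair κ r η s)

lemma quantileCoupling_apply (x : X) {S : Set (α × β)} (hS : MeasurableSet S) :
    quantileCoupling κ r η s x S =
      volume ({u | (rankQuantile (κ x) r u, rankQuantile (η x) s u) ∈ S} ∩ Ico 0 1) := by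
  rw [quantileCoupling, Kernel.map_apply' _ (measurable_rankQuantile_pair κ r η s) _ hS,
    Kernel.prod_apply, Kernel.id_apply, Kernel.const_apply, Measure.dirac_prod,
    Measure.map_apply measurable_prodMk_left ((measurable_rankQuantile_pair κ r η s) hS),
    Measure.restrict_apply' measurableSet_Ico]
  rfl

lemma quantileCoupling_apply_singleton (x : X) (a : α) (b : β) :
    quantileCoupling κ r η s x {(a, b)} =
      volume (rankInterval (κ x) r a ∩ rankInterval (η x) s b) := by
  rw [quantileCoupling_apply κ r η s x (measurableSet_singleton _),
    ← preimage_rankQuantile_inter_Ico a, ← preimage_rankQuantile_inter_Ico b,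
    inter_inter_inter_comm, inter_self]
  simp only [mem_singleton_iff, Prod.mk.injEq, ofPred_and]

lemma quantileCoupling_map_fst : (quantileCoupling κ r η s).map Prod.fst = κ := by
  ext x : 1
  refine Measure.ext_of_singleton fun a => ?_
  rw [Kernel.map_apply _ measurable_fst,
    Measure.map_apply measurable_fst (measurableSet_singleton a),
    quantileCoupling_apply κ r η s x (measurable_fst (measurableSet_singleton a))]
  exact (congrArg volume (preimage_rankQuantile_inter_Ico a)).trans (volume_rankInterval a)

lemma quantileCoupling_map_snd : (quantileCoupling κ r η s).map Prod.snd = η := by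
  ext x : 1
  refine Measure.ext_of_singleton fun b => ?_
  rw [Kernel.map_apply _ measurable_snd,
    Measure.map_apply measurable_snd (measurableSet_singleton b),
    quantileCoupling_apply κ r η s x (measurable_snd (measurableSet_singleton b))]
  exact (congrArg volume (preimage_rankQuantile_inter_Ico b)).trans (volume_rankInterval b)

variable {κ r η s}

lemma quantileCoupling_real_singleton (x : X) (a : α) (b : β) :
    (quantileCoupling κ r η s x).real {(a, b)} =
      volume.real (rankInterval (κ x) r a ∩ rankInterval (η x) s b) := by
  rw [measureReal_def, quantileCoupling_apply_singleton, measureReal_def]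

variable {a : α} {b : β}

lemma quantileCoupling_real_first_first (ha : ∀ c, r a ≤ r c) (hb : ∀ c, s b ≤ s c)
    (x : X) :
    (quantileCoupling κ r η s x).real {(a, b)} = min ((κ x).real {a}) ((η x).real {b}) := by
  rw [quantileCoupling_real_singleton, rankInterval_of_forall_le ha, rankInterval_of_forall_le hb,
    Ico_inter_Ico, Real.volume_real_Ico, max_self, sub_zero,
    max_eq_left (le_min measureReal_nonneg measureReal_nonneg)]

lemma quantileCoupling_real_last_last (ha : ∀ c, r c ≤ r a) (hb : ∀ c, s c ≤ s b) (x : X) :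
    (quantileCoupling κ r η s x).real {(a, b)} = min ((κ x).real {a}) ((η x).real {b}) := by
  rw [quantileCoupling_real_singleton, rankInterval_of_forall_ge ha, rankInterval_of_forall_ge hb,
    Ico_inter_Ico, Real.volume_real_Ico, min_self, max_sub_sub_left, sub_sub_cancel,
    max_eq_left (le_min measureReal_nonneg measureReal_nonneg)]

lemma quantileCoupling_real_first_last (ha : ∀ c, r a ≤ r c) (hb : ∀ c, s c ≤ s b) (x : X) :
    (quantileCoupling κ r η s x).real {(a, b)} =
      max ((κ x).real {a} + (η x).real {b} - 1) 0 := by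
  rw [quantileCoupling_real_singleton, rankInterval_of_forall_le ha, rankInterval_of_forall_ge hb,
    Ico_inter_Ico, Real.volume_real_Ico, min_eq_left measureReal_le_one,
    max_eq_right (sub_nonneg.2 measureReal_le_one)]
  congr 1
  ring

lemma quantileCoupling_real_last_first (ha : ∀ c, r c ≤ r a) (hb : ∀ c, s b ≤ s c) (x : X) :
    (quantileCoupling κ r η s x).real {(a, b)} =
      max ((κ x).real {a} + (η x).real {b} - 1) 0 := by
  rw [quantileCoupling_real_singleton, rankInterval_of_forall_ge ha, rankInterval_of_forall_le hb,
    Ico_inter_Ico, Real.volume_real_Ico, min_eq_right measureReal_le_one,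
    max_eq_left (sub_nonneg.2 measureReal_le_one)]
  congr 1
  ring

end QuantileCoupling

section KernelCoupling

variable {X Y1 Y0 : Type*} [MeasurableSpace X] [MeasurableSpace Y1] [MeasurableSpace Y0]
  (μX : Measure X) (π : Kernel X (Y1 × Y0))

lemma map_compProd_mem_MSet [IsProbabilityMeasure μX] [IsMarkovKernel π] :
    (μX ⊗ₘ π).map (fun p => (p.2.1, p.2.2, p.1)) ∈
      MSet ((μX ⊗ₘ π.map Prod.fst).map Prod.swap)
        ((μX ⊗ₘ π.map Prod.snd).map Prod.swap) := by
  refine ⟨Measure.isProbabilityMeasure_map (by fun_prop), ?_, ?_⟩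
  · rw [Measure.map_map (by fun_prop) (by fun_prop), Measure.compProd_map measurable_fst,
      Measure.map_map (by fun_prop) (by fun_prop)]
    rfl
  · rw [Measure.map_map (by fun_prop) (by fun_prop), Measure.compProd_map measurable_snd,
      Measure.map_map (by fun_prop) (by fun_prop)]
    rfl

lemma real_map_compProd_pair [IsFiniteMeasure μX] [IsFiniteKernel π]
    [MeasurableSingletonClass Y1] [MeasurableSingletonClass Y0] (a : Y1) (b : Y0) :
    ((μX ⊗ₘ π).map (fun p => (p.2.1, p.2.2, p.1))).real {p | p.1 = a ∧ p.2.1 = b} =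
      ∫ x, (π x).real {(a, b)} ∂μX := by
  have hS : MeasurableSet {p : Y1 × Y0 × X | p.1 = a ∧ p.2.1 = b} :=
    (measurable_fst (measurableSet_singleton a)).inter
      ((measurable_fst.comp measurable_snd) (measurableSet_singleton b))
  have hslice : ∀ x : X, Prod.mk x ⁻¹' ((fun p : X × Y1 × Y0 => (p.2.1, p.2.2, p.1)) ⁻¹'
      {p | p.1 = a ∧ p.2.1 = b}) = {(a, b)} := fun x => by
    ext; simp [Prod.ext_iff]
  rw [measureReal_def, Measure.map_apply (by fun_prop) hS,
    Measure.compProd_apply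
      ((by fun_prop : Measurable fun p : X × Y1 × Y0 => (p.2.1, p.2.2, p.1)) hS)]
  simp only [hslice]
  exact (integral_toReal (π.measurable_coe (measurableSet_singleton _)).aemeasurable
    (ae_of_all _ fun x => measure_lt_top _ _)).symm

end KernelCoupling

theorem tprd_simultaneous_frechet_attainability_general
    {J : ℕ} {X : Type*} [MeasurableSpace X]
    (μX : Measure X) [IsProbabilityMeasure μX]
    (κ1 : Kernel X (Fin 2 × Fin 2)) [IsMarkovKernel κ1]
    (κ0 : Kernel X (Fin J)) [IsMarkovKernel κ0]
    (μ1X : Measure ((Fin 2 × Fin 2) × X)) (μ0X : Measure (Fin J × X))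
    (hκ1 : (μX.compProd κ1).map Prod.swap = μ1X)
    (hκ0 : (μX.compProd κ0).map Prod.swap = μ0X)
    (j j' : Fin J) (hjj' : j ≠ j')
    (P11 P01 : X → ℝ) (Pc : Fin J → X → ℝ)
    (hP11 : P11 = fun x => (κ1 x {((1:Fin 2), (1:Fin 2))}).toReal)
    (hP01 : P01 = fun x => (κ1 x {((0:Fin 2), (1:Fin 2))}).toReal)
    (hPc : Pc = fun ℓ x => (κ0 x {ℓ}).toReal) :
    ∃ μ ∈ MSet μ1X μ0X,
      (μ {p : (Fin 2 × Fin 2) × Fin J × X | p.1 = (1, 1) ∧ p.2.1 = j}).toReal =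
          (∫ x, min (P11 x) (Pc j x) ∂μX) ∧
      (μ {p : (Fin 2 × Fin 2) × Fin J × X | p.1 = (0, 1) ∧ p.2.1 = j}).toReal =
          (∫ x, max (P01 x + Pc j x - 1) 0 ∂μX) ∧
      (μ {p : (Fin 2 × Fin 2) × Fin J × X | p.1 = (1, 1) ∧ p.2.1 = j'}).toReal =
          (∫ x, max (P11 x + Pc j' x - 1) 0 ∂μX) ∧
      (μ {p : (Fin 2 × Fin 2) × Fin J × X | p.1 = (0, 1) ∧ p.2.1 = j'}).toReal =
          (∫ x, min (P01 x) (Pc j' x) ∂μX) := by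
  subst hκ1 hκ0 hP11 hP01 hPc
  have : Nonempty (Fin J) := ⟨j⟩
  obtain ⟨r, hr01, hr11⟩ :=
    exists_embedding_nat_first_last (show ((0, 1) : Fin 2 × Fin 2) ≠ (1, 1) by decide)
  obtain ⟨s, hsj', hsj⟩ := exists_embedding_nat_first_last hjj'.symm
  have hmem := map_compProd_mem_MSet μX (quantileCoupling κ1 r κ0 s)
  rw [quantileCoupling_map_fst, quantileCoupling_map_snd] at hmem
  refine ⟨_, hmem, ?_, ?_, ?_, ?_⟩ <;> refine (real_map_compProd_pair μX _ _ _).trans ?_ <;>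
    refine integral_congr_ae (ae_of_all _ fun x => ?_)
  · exact quantileCoupling_real_last_last hr11 hsj x
  · exact quantileCoupling_real_first_last hr01 hsj x
  · exact quantileCoupling_real_last_first hr11 hsj' x
  · exact quantileCoupling_real_first_first hr01 hsj' x

/-- The simultaneous-attainability claim in the proof of Corollary 2: a single coupling
`μ ∈ M(μ1X, μ0X)` attains the four Fréchet bounds at the pair of classes `a_j ≠ a_{j†}`
simultaneously. -/
theorem tprd_simultaneous_frechet_attainability
    {J : ℕ} {X : Type*} [MeasurableSpace X] [StandardBorelSpace X]
    (μX : Measure X) [IsProbabilityMeasure μX]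
    (κ1 : Kernel X (Fin 2 × Fin 2)) [IsMarkovKernel κ1]
    (κ0 : Kernel X (Fin J)) [IsMarkovKernel κ0]
    (μ1X : Measure ((Fin 2 × Fin 2) × X)) (μ0X : Measure (Fin J × X))
    (hκ1 : (μX.compProd κ1).map Prod.swap = μ1X)
    (hκ0 : (μX.compProd κ0).map Prod.swap = μ0X)
    (j j' : Fin J) (hjj' : j ≠ j')
    (P11 P01 : X → ℝ) (Pc : Fin J → X → ℝ)
    (hP11 : P11 = fun x => (κ1 x {((1:Fin 2), (1:Fin 2))}).toReal)
    (hP01 : P01 = fun x => (κ1 x {((0:Fin 2), (1:Fin 2))}).toReal)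
    (hPc : Pc = fun ℓ x => (κ0 x {ℓ}).toReal) :
    ∃ μ ∈ MSet μ1X μ0X,
      (μ {p : (Fin 2 × Fin 2) × Fin J × X | p.1 = (1, 1) ∧ p.2.1 = j}).toReal =
          (∫ x, min (P11 x) (Pc j x) ∂μX) ∧
      (μ {p : (Fin 2 × Fin 2) × Fin J × X | p.1 = (0, 1) ∧ p.2.1 = j}).toReal =
          (∫ x, max (P01 x + Pc j x - 1) 0 ∂μX) ∧
      (μ {p : (Fin 2 × Fin 2) × Fin J × X | p.1 = (1, 1) ∧ p.2.1 = j'}).toReal =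
          (∫ x, max (P11 x + Pc j' x - 1) 0 ∂μX) ∧
      (μ {p : (Fin 2 × Fin 2) × Fin J × X | p.1 = (0, 1) ∧ p.2.1 = j'}).toReal =
          (∫ x, min (P01 x) (Pc j' x) ∂μX) :=
  tprd_simultaneous_frechet_attainability_general μX κ1 κ0 μ1X μ0X hκ1 hκ0 j j' hjj' P11 P01 Pc hP11
    hP01 hPc
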